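/- Let a_1 > b_1 > a_2 > b_2 > … > a_k > b_k > a_{k+1} be strictly interlacing real numbers and let Z(z) be the (k+1)×(k+1) Hermitian matrix with diagonal b_1,…,b_k,z_{k+1}, off-diagonal last column \bar{z}_1,…,\bar{z}_k and last row z_1,…,z_k, where z_{k+1} = Σ_{i=1}^{k+1} a_i − Σ_{i=1}^{k} b_i. Then there exist unique positive real numbers δ_1,…,δ_k such that Z(z) has eigenvalues a_1,…,a_{k+1} if and only if |z_i|² = δ_i for all i. In particular the set of such (z_1,…,z_k) ∈ ℂᵏ is a real k-torus. -/

import Mathlib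

open Polynomial

/-- The Hermitian "arrow" matrix with diagonal `b 0, …, b (k-1), w`, last column
`conj (z 0), …, conj (z (k-1))`, last row `z 0, …, z (k-1)`, and zeros elsewhere. -/
noncomputable def arrowMatrix {k : ℕ} (b : Fin k → ℝ) (z : Fin k → ℂ) (w : ℝ) :
    Matrix (Fin (k + 1)) (Fin (k + 1)) ℂ := fun i j =>
  if hik : (i : ℕ) < k then
    if hjk : (j : ℕ) < k then
      if i = j then ((b ⟨(i : ℕ), hik⟩ : ℝ) : ℂ) else 0
    else (starRingEnd ℂ) (z ⟨(i : ℕ), hik⟩)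
  else
    if hjk : (j : ℕ) < k then z ⟨(j : ℕ), hjk⟩ else ((w : ℝ) : ℂ)

/-!
Taking the Schur complement of the diagonal block, the characteristic polynomial of `Z(z)` is
`(X - z_{k+1}) g - ∑ |z_i|² g / (X - b_i)` with `g = ∏ (X - b_i)`, so it depends on `z` only
through the `|z_i|²`. The choice of `z_{k+1}` makes it agree with `f = ∏ (X - a_i)` in degrees
`k + 1` and `k`, hence it equals `f` iff the two agree at the `k` nodes `b_m`, that is iff
`|z_m|² = -f(b_m) / g'(b_m)`. Interlacing gives `f(b_m)` the sign `(-1)^(m+1)` and `g'(b_m)` the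
sign `(-1)^m`, so these values are positive.
-/

open Matrix Finset

theorem Polynomial.Monic.degree_sub_lt_of_nextCoeff_eq {R : Type*} [CommRing R] {p q : R[X]}
    (hp : p.Monic) (hq : q.Monic) {n : ℕ} (hpn : p.natDegree = n + 1) (hqn : q.natDegree = n + 1)
    (h : p.nextCoeff = q.nextCoeff) : (p - q).degree < n := by
  rw [degree_lt_iff_coeff_zero]
  intro m hm
  rw [coeff_sub, sub_eq_zero]
  rcases hm.eq_or_lt with rfl | hm
  · rwa [nextCoeff_of_natDegree_pos (by omega), nextCoeff_of_natDegree_pos (by omega), hpn, hqn,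
      Nat.add_sub_cancel] at h
  rcases (show n + 1 ≤ m by omega).eq_or_lt with rfl | hm
  · rw [← hpn, hp.coeff_natDegree, hpn, ← hqn, hq.coeff_natDegree]
  · rw [coeff_eq_zero_of_natDegree_lt (by omega), coeff_eq_zero_of_natDegree_lt (by omega)]

theorem Finset.neg_one_pow_card_filter_neg_mul_prod_pos {R ι : Type*} [CommRing R] [LinearOrder R]
    [IsStrictOrderedRing R] (s : Finset ι) (f : ι → R) (hf : ∀ i ∈ s, f i ≠ 0) :
    0 < (-1) ^ #{i ∈ s | f i < 0} * ∏ i ∈ s, f i := by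
  rw [← prod_filter_mul_prod_filter_not s (fun i => f i < 0), ← mul_assoc, ← prod_neg]
  refine mul_pos (prod_pos fun i hi => ?_) (prod_pos fun i hi => ?_)
  · exact neg_pos.2 (mem_filter.1 hi).2
  · obtain ⟨hi, hneg⟩ := mem_filter.1 hi
    exact lt_of_le_of_ne (not_lt.1 hneg) (hf i hi).symm

section ArrowPoly

variable {F : Type*} [Field F] {k : ℕ}

/-- The characteristic polynomial of an arrowhead matrix with diagonal `b, w` whose border entries
satisfy `|z_i|² = t i`. -/
noncomputable def arrowPoly (b t : Fin k → F) (w : F) : F[X] :=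
  (X - C w) * ∏ i, (X - C (b i)) - ∑ i, C (t i) * ∏ j ∈ univ.erase i, (X - C (b j))

/-- With `f = ∏ (X - a_i)` and `g = ∏ (X - b_j)` this is `-f(b_m) / g'(b_m)`. -/
noncomputable def arrowWeight (a : Fin (k + 1) → F) (b : Fin k → F) (m : Fin k) : F :=
  -(∏ i, (b m - a i)) / ∏ j ∈ univ.erase m, (b m - b j)

theorem map_arrowWeight {G : Type*} [Field G] (φ : F →+* G) (a : Fin (k + 1) → F)
    (b : Fin k → F) (m : Fin k) :
    φ (arrowWeight a b m) = arrowWeight (φ ∘ a) (φ ∘ b) m := by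
  simp [arrowWeight, map_div₀, map_prod]

theorem eval_arrowPoly_node (b t : Fin k → F) (w : F) (m : Fin k) :
    (arrowPoly b t w).eval (b m) = -(t m * ∏ j ∈ univ.erase m, (b m - b j)) := by
  rw [arrowPoly, eval_sub, eval_mul, eval_prod, prod_eq_zero (mem_univ m) (by simp), mul_zero,
    zero_sub, eval_finsetSum, sum_eq_single m]
  · simp [eval_prod]
  · intro i _ him
    rw [eval_mul, eval_prod, prod_eq_zero (mem_erase.2 ⟨him.symm, mem_univ m⟩) (by simp),
      mul_zero]
  · simp

theorem degree_arrowPoly_sub_prod_lt (a : Fin (k + 1) → F) (b t : Fin k → F) {w : F}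
    (hw : w = ∑ i, a i - ∑ i, b i) :
    (arrowPoly b t w - ∏ i, (X - C (a i))).degree < (k : WithBot ℕ) := by
  have hg : (∏ i, (X - C (b i))).Monic := monic_prod_of_monic _ _ fun i _ => monic_X_sub_C _
  have hf : (∏ i, (X - C (a i))).Monic := monic_prod_of_monic _ _ fun i _ => monic_X_sub_C _
  -- the trace condition on `w` makes the coefficients of `X ^ k` agree
  have hlead :
      ((X - C w) * ∏ i, (X - C (b i)) - ∏ i, (X - C (a i))).degree < (k : WithBot ℕ) := by
    refine ((monic_X_sub_C w).mul hg).degree_sub_lt_of_nextCoeff_eq hf ?_ ?_ ?_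
    · rw [(monic_X_sub_C w).natDegree_mul hg,
        natDegree_prod_of_monic _ _ fun i _ => monic_X_sub_C _]
      simp [add_comm]
    · rw [natDegree_prod_of_monic _ _ fun i _ => monic_X_sub_C _]
      simp
    · rw [(monic_X_sub_C w).nextCoeff_mul hg, nextCoeff_X_sub_C, prod_X_sub_C_nextCoeff,
        prod_X_sub_C_nextCoeff, hw]
      ring
  have hsum :
      (∑ i, C (t i) * ∏ j ∈ univ.erase i, (X - C (b j))).degree < (k : WithBot ℕ) := by
    refine (degree_sum_le _ _).trans_lt ((Finset.sup_lt_iff (WithBot.bot_lt_coe k)).2 fun i _ => ?_)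
    rw [← smul_eq_C_mul]
    refine (degree_smul_le _ _).trans_lt ?_
    simp only [degree_prod, degree_X_sub_C, sum_const, card_erase_of_mem (mem_univ i), card_univ,
      Fintype.card_fin, nsmul_eq_mul, mul_one]
    exact Nat.cast_lt.2 (Nat.sub_lt i.pos one_pos)
  rw [arrowPoly, sub_right_comm]
  exact (degree_sub_le _ _).trans_lt (max_lt hlead hsum)

theorem arrowPoly_eq_prod_iff (a : Fin (k + 1) → F) {b : Fin k → F} (hb : Function.Injective b)
    (t : Fin k → F) {w : F} (hw : w = ∑ i, a i - ∑ i, b i) :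
    arrowPoly b t w = ∏ i, (X - C (a i)) ↔ ∀ m, t m = arrowWeight a b m := by
  have hnode : ∀ m, t m = arrowWeight a b m ↔
      (arrowPoly b t w).eval (b m) = (∏ i, (X - C (a i))).eval (b m) := by
    intro m
    have hden : ∏ j ∈ univ.erase m, (b m - b j) ≠ 0 :=
      prod_ne_zero_iff.2 fun j hj => sub_ne_zero.2 (hb.ne (ne_of_mem_erase hj).symm)
    rw [eval_arrowPoly_node, eval_prod, arrowWeight, eq_div_iff hden]
    simp only [eval_sub, eval_X, eval_C]
    constructor <;> intro h <;> linear_combination -h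
  refine ⟨fun h m => (hnode m).2 (by rw [h]), fun h => ?_⟩
  refine eq_of_degree_sub_lt_of_eval_index_eq univ hb.injOn ?_ fun m _ => (hnode m).1 (h m)
  simpa using degree_arrowPoly_sub_prod_lt a b t hw

end ArrowPoly

section Interlacing

variable {k : ℕ} {a : Fin (k + 1) → ℝ} {b : Fin k → ℝ}
  (hab : ∀ i : Fin k, b i < a i.castSucc ∧ a i.succ < b i)
include hab

theorem strictAnti_of_interlace : StrictAnti a :=
  Fin.strictAnti_iff_succ_lt.2 fun i => (hab i).2.trans (hab i).1

theorem lt_of_castSucc_lt_of_interlace {m : Fin k} {i : Fin (k + 1)} (h : m.castSucc < i) :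
    a i < b m :=
  ((strictAnti_of_interlace hab).antitone (Fin.castSucc_lt_iff_succ_le.1 h)).trans_lt (hab m).2

theorem lt_iff_le_castSucc_of_interlace (m : Fin k) (i : Fin (k + 1)) :
    b m < a i ↔ i ≤ m.castSucc :=
  ⟨fun h => not_lt.1 fun hi => (lt_of_castSucc_lt_of_interlace hab hi).not_gt h,
    fun h => (hab m).1.trans_le ((strictAnti_of_interlace hab).antitone h)⟩

theorem ne_of_interlace (m : Fin k) (i : Fin (k + 1)) : b m ≠ a i := by
  rcases le_or_gt i m.castSucc with h | h
  · exact ((lt_iff_le_castSucc_of_interlace hab m i).2 h).ne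
  · exact (lt_of_castSucc_lt_of_interlace hab h).ne'

theorem strictAnti_right_of_interlace : StrictAnti b := fun m j hmj =>
  (hab j).1.trans <| ((strictAnti_of_interlace hab).antitone
    (Fin.succ_le_castSucc_iff.2 hmj)).trans_lt (hab m).2

theorem arrowWeight_pos (m : Fin k) : 0 < arrowWeight a b m := by
  have hb := strictAnti_right_of_interlace hab
  have hnum := neg_one_pow_card_filter_neg_mul_prod_pos univ (fun i => b m - a i)
    fun i _ => sub_ne_zero.2 (ne_of_interlace hab m i)
  have hnum_card : #{i | b m - a i < 0} = m + 1 := by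
    rw [show ({i | b m - a i < 0} : Finset _) = Iic m.castSucc by
      ext i; simp [lt_iff_le_castSucc_of_interlace hab], Fin.card_Iic, Fin.val_castSucc]
  have hden := neg_one_pow_card_filter_neg_mul_prod_pos (univ.erase m) (fun j => b m - b j)
    fun j hj => sub_ne_zero.2 (hb.injective.ne (ne_of_mem_erase hj).symm)
  have hden_card : #{j ∈ univ.erase m | b m - b j < 0} = m := by
    rw [show ({j ∈ univ.erase m | b m - b j < 0} : Finset _) = Iio m by
      ext j; simp [hb.lt_iff_gt, and_iff_right_of_imp ne_of_lt], Fin.card_Iio]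
  rw [hnum_card] at hnum
  rw [hden_card] at hden
  calc 0 < (-1) ^ ((m : ℕ) + 1) * (∏ i, (b m - a i)) /
        ((-1) ^ (m : ℕ) * ∏ j ∈ univ.erase m, (b m - b j)) := div_pos hnum hden
    _ = arrowWeight a b m := by
      rw [arrowWeight, pow_succ, mul_neg_one, neg_mul, ← mul_neg,
        mul_div_mul_left _ _ (by positivity)]

end Interlacing

section ArrowMatrix

variable {k : ℕ} (b : Fin k → ℝ) (z : Fin k → ℂ) (w : ℝ)

theorem submatrix_scalar_sub_arrowMatrix (x : ℂ) :
    (scalar (Fin (k + 1)) x - arrowMatrix b z w).submatrix finSumFinEquiv finSumFinEquiv =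
      fromBlocks (diagonal fun i => x - b i) (of fun i (_ : Fin 1) => -starRingEnd ℂ (z i))
        (of fun (_ : Fin 1) j => -z j) (of fun _ _ => x - w) := by
  ext (i | i) (j | j)
  · rcases eq_or_ne i j with rfl | hij
    · simp [arrowMatrix]
    · simp [arrowMatrix, hij, Fin.castAdd]
  · simp [arrowMatrix, Fin.ext_iff, i.isLt.ne]
  · simp [arrowMatrix, Fin.ext_iff, j.isLt.ne']
  · simp [arrowMatrix, diagonal_apply, Fin.ext_iff]

theorem det_scalar_sub_arrowMatrix {x : ℂ} (hx : ∀ i, x ≠ b i) :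
    (scalar (Fin (k + 1)) x - arrowMatrix b z w).det =
      (∏ i, (x - b i)) * (x - w - ∑ i, Complex.normSq (z i) / (x - b i)) := by
  have hx' : ∀ i, x - b i ≠ 0 := fun i => sub_ne_zero.2 (hx i)
  let : Invertible (diagonal fun i => x - b i) :=
    ⟨diagonal fun i => (x - b i)⁻¹, by simp [hx'], by simp [hx']⟩
  rw [← det_submatrix_equiv_self finSumFinEquiv, submatrix_scalar_sub_arrowMatrix,
    det_fromBlocks₁₁, det_diagonal, det_unique, show ⅟(diagonal fun i => x - b i) =
      diagonal fun i => (x - b i)⁻¹ from rfl]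
  simp [Matrix.mul_apply, diagonal_apply, Complex.normSq_eq_conj_mul_self, div_eq_mul_inv,
    mul_assoc, mul_comm, mul_left_comm]

theorem charpoly_arrowMatrix :
    (arrowMatrix b z w).charpoly =
      arrowPoly (fun i => (b i : ℂ)) (fun i => (Complex.normSq (z i) : ℂ)) w := by
  refine eq_of_infinite_eval_eq _ _ ((Set.finite_range fun i => (b i : ℂ)).infinite_compl.mono ?_)
  intro x hx
  have hbx : ∀ i, x ≠ b i := fun i h => hx ⟨i, h.symm⟩
  simp only [Set.mem_ofPred_eq, eval_charpoly, det_scalar_sub_arrowMatrix b z w hbx, arrowPoly,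
    eval_sub, eval_mul, eval_prod, eval_finsetSum, eval_C, eval_X, mul_sub, mul_sum]
  congr 1
  · ring
  refine sum_congr rfl fun i _ => ?_
  rw [← mul_prod_erase _ _ (mem_univ i)]
  field_simp [sub_ne_zero.2 (hbx i)]

end ArrowMatrix

/-- For strictly interlacing `a₁ > b₁ > … > a_k > b_k > a_{k+1}` and the forced diagonal
entry `z_{k+1} = Σ a_i − Σ b_i`, there are unique positive reals `δ₁, …, δ_k` such that
the arrow matrix `Z(z)` has eigenvalues `a₁, …, a_{k+1}` iff `|z_i|² = δ_i` for all `i`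
(so the solution set is a real `k`-torus). -/
theorem stmt5 (k : ℕ) (a : Fin (k + 1) → ℝ) (b : Fin k → ℝ)
    (hab : ∀ i : Fin k, b i < a i.castSucc ∧ a i.succ < b i) :
    ∃! δ : Fin k → ℝ, (∀ i, 0 < δ i) ∧
      ∀ z : Fin k → ℂ,
        ((arrowMatrix b z ((∑ i, a i) - ∑ i, b i)).charpoly =
            ∏ i : Fin (k + 1), (X - C ((a i : ℝ) : ℂ))) ↔
          ∀ i, Complex.normSq (z i) = δ i := by
  have hb : Function.Injective fun i => (b i : ℂ) :=
    Complex.ofReal_injective.comp (strictAnti_right_of_interlace hab).injective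
  have key : ∀ z : Fin k → ℂ,
      (arrowMatrix b z ((∑ i, a i) - ∑ i, b i)).charpoly =
          ∏ i, (X - C ((a i : ℝ) : ℂ)) ↔
        ∀ i, Complex.normSq (z i) = arrowWeight a b i := by
    intro z
    rw [charpoly_arrowMatrix, arrowPoly_eq_prod_iff _ hb _ (by push_cast; rfl)]
    simp_rw [← Complex.ofReal_inj, ← Complex.ofRealHom_eq_coe, map_arrowWeight]
    rfl
  refine ⟨arrowWeight a b, ⟨arrowWeight_pos hab, key⟩,
    fun δ ⟨_, hδ⟩ => funext fun m => ?_⟩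
  set z : Fin k → ℂ := fun i => (√(arrowWeight a b i) : ℂ)
  have hz : ∀ i, Complex.normSq (z i) = arrowWeight a b i := fun i => by
    simp [z, Complex.normSq_ofReal, Real.mul_self_sqrt (arrowWeight_pos hab i).le]
  rw [← (hδ z).1 ((key z).2 hz) m, hz]
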